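/- Horn–Jackson theorem: let (S,R,k) be a complex-balanced mass-action system with point of complex balance α ∈ ℝ_{>0}^S. If x : [0,∞) → ℝ_{>0}^S solves the mass-action ODE x'(t) = ∑_{y→y' ∈ R} k_{y→y'} (y'−y) x(t)^y, then d/dt g_α(x(t)) ≤ 0 for all t ≥ 0, where g_α(x) = ∑_i (x_i log x_i − x_i − x_i log α_i); moreover equality holds at time t if and only if x(t) is itself a point of complex balance. -/

import Mathlib

/-!
Write the state as `x = α · e^μ`, i.e. `μ = log x - log α`. Along the flow, `g_α` changes at rate
`∑ᵢ μᵢ ẋᵢ = ∑_{y → y'} k x^y (⟨y', μ⟩ - ⟨y, μ⟩)`. Complex balance of `α` makes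
`∑_{y → y'} k α^y (e^{⟨y', μ⟩} - e^{⟨y, μ⟩})` vanish; subtracting it turns the rate into
`∑_{y → y'} k α^y (e^a (b - a) - (e^b - e^a))` with `a = ⟨y, μ⟩`, `b = ⟨y', μ⟩`, and every term is
`≤ 0` by convexity of `exp`, with equality exactly when `a = b`. Finally `x` is complex balanced iff
`⟨y' - y, μ⟩ = 0` for every reaction: if so, `x^y = α^y e^{⟨y, μ⟩}` scales the balance equation of
`α` at the complex `y`; conversely, complex balance of `x` makes the rate vanish.
-/

open Finset Real

theorem Finset.sum_mul_comp_eq_of_sum_fiber_eq {ι κ M : Type*} [DecidableEq κ]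
    [NonUnitalNonAssocSemiring M] (s : Finset ι) (a b : ι → κ) (w : ι → M) (G : κ → M)
    (h : ∀ y, ∑ i ∈ s with a i = y, w i = ∑ i ∈ s with b i = y, w i) :
    ∑ i ∈ s, w i * G (a i) = ∑ i ∈ s, w i * G (b i) := by
  set t := s.image a ∪ s.image b
  have ha : ∀ i ∈ s, a i ∈ t := fun i hi => mem_union_left _ (mem_image_of_mem a hi)
  have hb : ∀ i ∈ s, b i ∈ t := fun i hi => mem_union_right _ (mem_image_of_mem b hi)
  have fiber (c : ι → κ) (y : κ) :
      ∑ i ∈ s with c i = y, w i * G (c i) = (∑ i ∈ s with c i = y, w i) * G y := by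
    rw [sum_mul]
    exact sum_congr rfl fun i hi => by rw [(mem_filter.mp hi).2]
  rw [← sum_fiberwise_of_maps_to ha, ← sum_fiberwise_of_maps_to hb]
  exact sum_congr rfl fun y _ => by rw [fiber, fiber, h]

namespace Real

theorem exp_mul_sub_le_exp_sub_exp (a b : ℝ) : exp a * (b - a) ≤ exp b - exp a := by
  have := mul_le_mul_of_nonneg_left (add_one_le_exp (b - a)) (exp_pos a).le
  rw [← exp_add, add_sub_cancel] at this
  linarith

theorem exp_mul_sub_lt_exp_sub_exp {a b : ℝ} (h : a ≠ b) : exp a * (b - a) < exp b - exp a := by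
  have := mul_lt_mul_of_pos_left (add_one_lt_exp (sub_ne_zero.mpr h.symm)) (exp_pos a)
  rw [← exp_add, add_sub_cancel] at this
  linarith

theorem exp_mul_sub_eq_exp_sub_exp_iff {a b : ℝ} : exp a * (b - a) = exp b - exp a ↔ a = b := by
  refine ⟨fun h => ?_, fun h => by rw [h, sub_self, sub_self, mul_zero]⟩
  by_contra hab
  exact (exp_mul_sub_lt_exp_sub_exp hab).ne h

end Real

namespace ReactionNetwork

variable {S : Type*} [Fintype S]

def monomial (x : S → ℝ) (y : S → ℕ) : ℝ := ∏ i, x i ^ y i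

def pairing (y : S → ℕ) (μ : S → ℝ) : ℝ := ∑ i, (y i : ℝ) * μ i

theorem monomial_pos {x : S → ℝ} (hx : ∀ i, 0 < x i) (y : S → ℕ) : 0 < monomial x y :=
  prod_pos fun i _ => pow_pos (hx i) _

theorem monomial_mul_exp (α μ : S → ℝ) (y : S → ℕ) :
    monomial (fun i => α i * exp (μ i)) y = monomial α y * exp (pairing y μ) := by
  simp only [monomial, pairing, exp_sum, exp_nat_mul, mul_pow, prod_mul_distrib]

variable (R : Finset ((S → ℕ) × (S → ℕ))) (k : (S → ℕ) × (S → ℕ) → ℝ)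

def massActionField (x : S → ℝ) (i : S) : ℝ :=
  ∑ r ∈ R, k r * ((r.2 i : ℝ) - r.1 i) * monomial x r.1

def IsComplexBalanced [DecidableEq S] (x : S → ℝ) : Prop :=
  ∀ y : S → ℕ, ∑ r ∈ R with r.2 = y, k r * monomial x r.1 = ∑ r ∈ R with r.1 = y, k r * monomial x y

theorem sum_mul_massActionField (x μ : S → ℝ) :
    ∑ i, μ i * massActionField R k x i =
      ∑ r ∈ R, k r * monomial x r.1 * (pairing r.2 μ - pairing r.1 μ) := by
  simp only [massActionField, mul_sum]
  rw [sum_comm]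
  refine sum_congr rfl fun r _ => ?_
  rw [pairing, pairing, ← sum_sub_distrib, mul_sum]
  exact sum_congr rfl fun i _ => by ring

theorem hasDerivAt_sum_mul_log_sub {x : ℝ → S → ℝ} {x' : S → ℝ} {t : ℝ} (α : S → ℝ)
    (hx : ∀ i, x t i ≠ 0) (hdx : ∀ i, HasDerivAt (fun τ => x τ i) (x' i) t) :
    HasDerivAt (fun τ => ∑ i, (x τ i * log (x τ i) - x τ i - x τ i * log (α i)))
      (∑ i, (log (x t i) - log (α i)) * x' i) t := by
  refine HasDerivAt.fun_sum fun i _ => ?_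
  have hg : HasDerivAt (fun u => u * log u - u - u * log (α i))
      (log (x t i) - log (α i)) (x t i) := by
    refine ((((hasDerivAt_id' _).mul (hasDerivAt_log (hx i))).sub (hasDerivAt_id' _)).sub
      ((hasDerivAt_id' _).mul_const (log (α i)))).congr_deriv ?_
    rw [mul_inv_cancel₀ (hx i)]
    ring
  exact hg.comp t (hdx i)

variable {R k} [DecidableEq S]

theorem IsComplexBalanced.sum_mul_snd_eq {x : S → ℝ} (hx : IsComplexBalanced R k x)
    (G : (S → ℕ) → ℝ) :
    ∑ r ∈ R, k r * monomial x r.1 * G r.2 = ∑ r ∈ R, k r * monomial x r.1 * G r.1 :=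
  R.sum_mul_comp_eq_of_sum_fiber_eq Prod.snd Prod.fst _ G fun y => by
    rw [hx y]
    exact sum_congr rfl fun r hr => by rw [(mem_filter.mp hr).2]

theorem IsComplexBalanced.sum_mul_massActionField_mul_exp {α : S → ℝ}
    (hα : IsComplexBalanced R k α) (μ : S → ℝ) :
    ∑ i, μ i * massActionField R k (fun i => α i * exp (μ i)) i =
      ∑ r ∈ R, k r * monomial α r.1 * (exp (pairing r.1 μ) * (pairing r.2 μ - pairing r.1 μ) -
        (exp (pairing r.2 μ) - exp (pairing r.1 μ))) := by
  have hzero : ∑ r ∈ R, k r * monomial α r.1 * (exp (pairing r.2 μ) - exp (pairing r.1 μ)) = 0 := by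
    simp only [mul_sub, sum_sub_distrib]
    rw [hα.sum_mul_snd_eq (fun y => exp (pairing y μ)), sub_self]
  rw [sum_mul_massActionField, ← sub_eq_zero, ← sum_sub_distrib, ← hzero]
  exact sum_congr rfl fun r _ => by rw [monomial_mul_exp]; ring

section Dissipation

variable {α : S → ℝ} (hk : ∀ r ∈ R, 0 < k r) (hαpos : ∀ i, 0 < α i)
  (hα : IsComplexBalanced R k α) (μ : S → ℝ)
include hk hαpos hα

theorem sum_mul_massActionField_mul_exp_nonpos :
    ∑ i, μ i * massActionField R k (fun i => α i * exp (μ i)) i ≤ 0 := by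
  rw [hα.sum_mul_massActionField_mul_exp]
  refine sum_nonpos fun r hr => mul_nonpos_of_nonneg_of_nonpos ?_ ?_
  · exact (mul_pos (hk r hr) (monomial_pos hαpos r.1)).le
  · exact sub_nonpos.mpr (exp_mul_sub_le_exp_sub_exp _ _)

theorem sum_mul_massActionField_mul_exp_eq_zero_iff :
    ∑ i, μ i * massActionField R k (fun i => α i * exp (μ i)) i = 0 ↔
      ∀ r ∈ R, pairing r.1 μ = pairing r.2 μ := by
  rw [hα.sum_mul_massActionField_mul_exp]
  have hterm (r) (hr : r ∈ R) := mul_pos (hk r hr) (monomial_pos hαpos r.1)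
  rw [sum_eq_zero_iff_of_nonpos fun r hr => mul_nonpos_of_nonneg_of_nonpos (hterm r hr).le
    (sub_nonpos.mpr (exp_mul_sub_le_exp_sub_exp _ _))]
  refine forall₂_congr fun r hr => ?_
  rw [mul_eq_zero, or_iff_right (hterm r hr).ne', sub_eq_zero, exp_mul_sub_eq_exp_sub_exp_iff]

theorem isComplexBalanced_mul_exp_iff :
    IsComplexBalanced R k (fun i => α i * exp (μ i)) ↔ ∀ r ∈ R, pairing r.1 μ = pairing r.2 μ := by
  refine ⟨fun hx => ?_, fun h y => ?_⟩
  · rw [← sum_mul_massActionField_mul_exp_eq_zero_iff hk hαpos hα, sum_mul_massActionField,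
      sum_congr rfl fun r _ => mul_sub _ _ _, sum_sub_distrib,
      hx.sum_mul_snd_eq (fun y => pairing y μ), sub_self]
  · have hfiber : ∀ r ∈ R.filter (·.2 = y),
        k r * monomial (fun i => α i * exp (μ i)) r.1 =
          k r * monomial α r.1 * exp (pairing y μ) := by
      intro r hr
      obtain ⟨hrR, rfl⟩ := mem_filter.mp hr
      rw [monomial_mul_exp, h r hrR, mul_assoc]
    rw [sum_congr rfl hfiber, ← sum_mul, hα y, sum_mul]
    exact sum_congr rfl fun r _ => by rw [monomial_mul_exp]; ring

end Dissipation

end ReactionNetwork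

open ReactionNetwork in
theorem stmt_15 {S : Type*} [Fintype S] [DecidableEq S]
    (R : Finset ((S → ℕ) × (S → ℕ)))
    (k : (S → ℕ) × (S → ℕ) → ℝ) (hk : ∀ r ∈ R, 0 < k r)
    (α : S → ℝ) (hα : ∀ i, 0 < α i)
    (hbal : ∀ y : S → ℕ,
      ∑ r ∈ R.filter (fun r => r.2 = y), k r * ∏ i, α i ^ r.1 i =
        ∑ r ∈ R.filter (fun r => r.1 = y), k r * ∏ i, α i ^ y i)
    (x : ℝ → (S → ℝ)) (hxpos : ∀ t ≥ (0 : ℝ), ∀ i, 0 < x t i)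
    (hode : ∀ t ≥ (0 : ℝ), ∀ i : S, HasDerivAt (fun τ => x τ i)
      (∑ r ∈ R, k r * ((r.2 i : ℝ) - (r.1 i : ℝ)) * ∏ s, x t s ^ r.1 s) t) :
    ∀ t ≥ (0 : ℝ), ∃ d : ℝ,
      HasDerivAt (fun τ => ∑ i, (x τ i * Real.log (x τ i) - x τ i -
        x τ i * Real.log (α i))) d t ∧
      d ≤ 0 ∧
      (d = 0 ↔ ∀ y : S → ℕ,
        ∑ r ∈ R.filter (fun r => r.2 = y), k r * ∏ i, x t i ^ r.1 i =
          ∑ r ∈ R.filter (fun r => r.1 = y), k r * ∏ i, x t i ^ y i) := by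
  intro t ht
  have hαbal : IsComplexBalanced R k α := hbal
  set μ : S → ℝ := fun i => Real.log (x t i) - Real.log (α i)
  have hx : x t = fun i => α i * Real.exp (μ i) := funext fun i => by
    rw [Real.exp_sub, Real.exp_log (hxpos t ht i), Real.exp_log (hα i)]
    field_simp [(hα i).ne']
  refine ⟨∑ i, μ i * massActionField R k (x t) i,
    hasDerivAt_sum_mul_log_sub α (fun i => (hxpos t ht i).ne') (hode t ht), ?_, ?_⟩
  · rw [hx]
    exact sum_mul_massActionField_mul_exp_nonpos hk hα hαbal μ
  · change _ ↔ IsComplexBalanced R k (x t)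
    rw [hx, sum_mul_massActionField_mul_exp_eq_zero_iff hk hα hαbal,
      isComplexBalanced_mul_exp_iff hk hα hαbal]
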